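/- arXiv:2012.11186 — 6 statements merged into one kernel-verified Lean document; each statement's English description precedes it below -/
import Mathlib

section
/- For all integers k, m, l ≥ 0 one has ∑_{i=0}^{l} d_{k+m+2i} = d_{k+l}·d_{m+l} − d_{k-1}·d_{m-1}. -/
/-- For all integers `k, m, l ≥ 0` one has
`∑_{i=0}^{l} d_{k+m+2i} = d_{k+l}·d_{m+l} − d_{k-1}·d_{m-1}`. -/
theorem stmt_3 (n : ℤ) (hn : 1 ≤ n) (d : ℤ → ℤ)
    (hneg : d (-1) = 0) (h0 : d 0 = 1) (h1 : d 1 = n + 1)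
    (hrec : ∀ m : ℤ, 2 ≤ m → d m = (n + 1) * d (m - 1) - d (m - 2)) :
    ∀ k m l : ℤ, 0 ≤ k → 0 ≤ m → 0 ≤ l →
      ∑ i ∈ Finset.Icc (0 : ℤ) l, d (k + m + 2 * i)
        = d (k + l) * d (m + l) - d (k - 1) * d (m - 1) := by
  -- step lemma
  have hstep : ∀ k : ℤ, 0 ≤ k → d (k + 1) = (n + 1) * d k - d (k - 1) := by
    intro k hk
    rcases eq_or_lt_of_le hk with h | h
    · subst h; simp [h0, h1, hneg]
    · have h2 : (2 : ℤ) ≤ k + 1 := by omega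
      have := hrec (k + 1) h2
      rw [show k + 1 - 1 = k by ring, show k + 1 - 2 = k - 1 by ring] at this
      exact this
  -- addition formula
  have hadd : ∀ m : ℤ, 0 ≤ m →
      ((∀ k : ℤ, 0 ≤ k → d (k + m) = d k * d m - d (k - 1) * d (m - 1)) ∧
       (∀ k : ℤ, 0 ≤ k → d (k + (m+1)) = d k * d (m+1) - d (k - 1) * d m)) := by
    intro m hm
    refine Int.le_induction (motive := fun m _ =>
      (∀ k : ℤ, 0 ≤ k → d (k + m) = d k * d m - d (k - 1) * d (m - 1)) ∧
      (∀ k : ℤ, 0 ≤ k → d (k + (m+1)) = d k * d (m+1) - d (k - 1) * d m)) ?_ ?_ m hm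
    · constructor
      · intro k hk; simp [h0, hneg]
      · intro k hk
        simp only [zero_add]
        rw [hstep k hk, h1, h0]
        ring
    · rintro m hm ⟨ihm, ihm1⟩
      constructor
      · intro k hk
        rw [show m + 1 - 1 = m by ring]
        exact ihm1 k hk
      intro k hk
      have e1 : d (k + (m + 1 + 1)) = (n + 1) * d (k + (m + 1)) - d (k + m) := by
        have := hstep (k + m + 1) (by omega)
        convert this using 2 <;> ring
      have e2 : d (m + 1 + 1) = (n + 1) * d (m + 1) - d m := by
        have := hstep (m + 1) (by omega)
        convert this using 2 <;> ring
      have e3 : d (m + 1) = (n + 1) * d m - d (m - 1) := by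
        have := hstep m hm
        convert this using 2 <;> ring
      rw [e1, ihm1 k hk, ihm k hk, e2]
      nth_rewrite 3 [e3]
      ring
  intro k m l hk hm hl
  refine Int.le_induction (motive := fun l _ =>
      ∑ i ∈ Finset.Icc (0 : ℤ) l, d (k + m + 2 * i)
        = d (k + l) * d (m + l) - d (k - 1) * d (m - 1)) ?_ ?_ l hl
  · simp only [Finset.Icc_self, Finset.sum_singleton, mul_zero, add_zero]
    exact (hadd m hm).1 k hk
  · intro l hl ih
    have hins : Finset.Icc (0:ℤ) (l+1) = insert (l+1) (Finset.Icc 0 l) := by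
      ext x; simp only [Finset.mem_Icc, Finset.mem_insert]; omega
    rw [hins, Finset.sum_insert (by simp only [Finset.mem_Icc]; omega), ih]
    have := (hadd (m + l + 1) (by omega)).1 (k + l + 1) (by omega)
    have e : k + l + 1 + (m + l + 1) = k + m + 2 * (l + 1) := by ring
    rw [e] at this
    rw [this]
    have e2 : k + l + 1 - 1 = k + l := by ring
    have e3 : m + l + 1 - 1 = m + l := by ring
    rw [e2, e3]
    ring_nf
end

section
/- The sequence of real numbers (d_{m-1}/d_m)_{m ≥ 0} is strictly increasing. -/
/-!
After the shift `u k = d (k - 1)` we have `u 0 = 0`, `u 1 = 1` and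
`u (k + 2) = a * u (k + 1) - u k` with `a = n + 1 ≥ 2`. For such a recurrence the Cassini-type
quantity `u (k + 1) ^ 2 - u k * u (k + 2)` does not depend on `k`, so it is `1`; and since `a ≥ 2`
the sequence is positive from `k = 1` on. So `u k * u (k + 2) < u (k + 1) ^ 2` with positive
denominators, which is exactly `u k / u (k + 1) < u (k + 1) / u (k + 2)`.
-/

section Recurrence

variable {R : Type*} [CommRing R]

theorem sq_sub_mul_eq_of_recurrence (a : R) (u : ℕ → R)
    (hrec : ∀ k, u (k + 2) = a * u (k + 1) - u k) (k : ℕ) :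
    u (k + 1) ^ 2 - u k * u (k + 2) = u 1 ^ 2 - u 0 * u 2 := by
  induction k with
  | zero => rfl
  | succ k ih =>
    rw [← ih]
    linear_combination u (k + 2) * hrec k - u (k + 1) * hrec (k + 1)

theorem nonneg_and_lt_succ_of_recurrence [LinearOrder R] [IsStrictOrderedRing R] {a : R}
    {u : ℕ → R} (ha : 2 ≤ a) (h0 : 0 ≤ u 0) (h01 : u 0 < u 1)
    (hrec : ∀ k, u (k + 2) = a * u (k + 1) - u k) (k : ℕ) : 0 ≤ u k ∧ u k < u (k + 1) := by
  induction k with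
  | zero => exact ⟨h0, h01⟩
  | succ k ih =>
    obtain ⟨hk, hlt⟩ := ih
    have hk1 : 0 ≤ u (k + 1) := hk.trans hlt.le
    refine ⟨hk1, ?_⟩
    rw [hrec k]
    nlinarith [mul_nonneg (sub_nonneg.2 ha) hk1]

end Recurrence

theorem strictMono_div_succ_of_mul_lt_sq {K : Type*} [Field K] [LinearOrder K]
    [IsStrictOrderedRing K] {u : ℕ → K} (hpos : ∀ k, 0 < u (k + 1))
    (hlc : ∀ k, u k * u (k + 2) < u (k + 1) ^ 2) : StrictMono fun k => u k / u (k + 1) := by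
  refine strictMono_nat_of_lt_succ fun k => ?_
  rw [div_lt_div_iff₀ (hpos k) (hpos (k + 1))]
  simpa [sq] using hlc k

/-- The sequence of real numbers `(d_{m-1}/d_m)_{m ≥ 0}` is strictly increasing. -/
theorem stmt_5 (n : ℤ) (hn : 1 ≤ n) (d : ℤ → ℤ)
    (hneg : d (-1) = 0) (h0 : d 0 = 1) (h1 : d 1 = n + 1)
    (hrec : ∀ m : ℤ, 2 ≤ m → d m = (n + 1) * d (m - 1) - d (m - 2)) :
    StrictMono (fun m : ℕ => (d ((m : ℤ) - 1) : ℝ) / (d (m : ℤ) : ℝ)) := by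
  obtain ⟨u, hu⟩ : ∃ u : ℕ → ℤ, ∀ k, u k = d ((k : ℤ) - 1) := ⟨_, fun _ => rfl⟩
  have u0 : u 0 = 0 := by simpa [hu] using hneg
  have u1 : u 1 = 1 := by simpa [hu] using h0
  have urec : ∀ k, u (k + 2) = (n + 1) * u (k + 1) - u k
    | 0 => by simp [hu, hneg, h0, h1]
    | k + 1 => by
      simp only [hu, Nat.cast_add, Nat.cast_one, Nat.cast_ofNat]
      rw [show (k : ℤ) + 1 + 2 - 1 = k + 2 by ring,
        show (k : ℤ) + 1 + 1 - 1 = k + 2 - 1 by ring, show (k : ℤ) + 1 - 1 = k + 2 - 2 by ring]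
      exact hrec _ (by omega)
  have cassini (k : ℕ) : u k * u (k + 2) < u (k + 1) ^ 2 := by
    have h := sq_sub_mul_eq_of_recurrence _ u urec k
    rw [u0, u1] at h
    linarith
  have hu_mono := nonneg_and_lt_succ_of_recurrence (a := n + 1) (by omega) u0.ge
    (by rw [u0, u1]; exact one_pos) urec
  have key := strictMono_div_succ_of_mul_lt_sq (u := fun k => (u k : ℝ))
    (fun k => by exact_mod_cast (hu_mono k).1.trans_lt (hu_mono k).2)
    (fun k => by exact_mod_cast cassini k)
  simpa [hu] using key
end

section
/- The sequence (μ_m)_{m ≥ 1} satisfies μ_1 = 1, μ_2 = (n+1)² − 1, and the recurrence μ_{m+1} = ((n+1)² − 2)·μ_m − μ_{m-1} + 1 for all m ≥ 2. -/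
/-- The sequence `(μ_m)_{m ≥ 1}` satisfies `μ_1 = 1`, `μ_2 = (n+1)² − 1`, and the
recurrence `μ_{m+1} = ((n+1)² − 2)·μ_m − μ_{m-1} + 1` for all `m ≥ 2`. -/
theorem stmt_9 (n : ℤ) (hn : 1 ≤ n) (d : ℤ → ℤ)
    (hneg : d (-1) = 0) (h0 : d 0 = 1) (h1 : d 1 = n + 1)
    (hrec : ∀ m : ℤ, 2 ≤ m → d m = (n + 1) * d (m - 1) - d (m - 2))
    (μ : ℤ → ℚ)
    (hμ : ∀ m : ℤ, 1 ≤ m → μ m = ((d m : ℚ) * (d (m - 1) : ℚ)) / ((n : ℚ) + 1)) :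
    μ 1 = 1 ∧ μ 2 = ((n : ℚ) + 1) ^ 2 - 1 ∧
      ∀ m : ℤ, 2 ≤ m →
        μ (m + 1) = (((n : ℚ) + 1) ^ 2 - 2) * μ m - μ (m - 1) + 1 := by
  have ha : ((n : ℚ) + 1) ≠ 0 := by
    have : (1:ℚ) ≤ (n:ℚ) := by exact_mod_cast hn
    linarith
  -- invariant
  have key : ∀ k : ℕ, d (1 + (k:ℤ)) ^ 2 - (n + 1) * d (1 + (k:ℤ)) * d (k:ℤ)
      + d (k:ℤ) ^ 2 = 1 := by
    intro k
    induction k with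
    | zero => norm_num [h1, h0]; ring
    | succ j ih =>
      push_cast
      have hr := hrec (1 + ((j:ℤ) + 1)) (by omega)
      rw [show 1 + ((j:ℤ) + 1) - 1 = 1 + (j:ℤ) from by ring,
        show 1 + ((j:ℤ) + 1) - 2 = (j:ℤ) from by ring] at hr
      rw [hr, show (j:ℤ) + 1 = 1 + (j:ℤ) from by ring]
      nlinarith [ih]
  have hinv : ∀ m : ℤ, 1 ≤ m →
      d m ^ 2 - (n + 1) * d m * d (m - 1) + d (m - 1) ^ 2 = 1 := by
    intro m hm
    obtain ⟨k, rfl⟩ : ∃ k : ℕ, m = 1 + (k:ℤ) := ⟨(m-1).toNat, by omega⟩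
    rw [show 1 + (k:ℤ) - 1 = (k:ℤ) from by ring]
    exact key k
  refine ⟨?_, ?_, ?_⟩
  · rw [hμ 1 le_rfl]
    norm_num [h1, h0]
    field_simp
    exact ha
  · rw [hμ 2 (by norm_num)]
    have hr := hrec 2 le_rfl
    norm_num at hr
    norm_num [hr, h1, h0, hneg]
    push_cast
    field_simp
  · intro m hm
    have h1' := hμ (m + 1) (by omega)
    have h2' := hμ m (by omega)
    have h3' := hμ (m - 1) (by omega)
    have hr1 := hrec (m + 1) (by omega)
    have hr2 := hrec m (by omega)
    rw [show m + 1 - 1 = m from by ring, show m + 1 - 2 = m - 1 from by ring] at hr1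
    have hd2 : d (m - 2) = (n + 1) * d (m - 1) - d m := by omega
    have hk := hinv m (by omega)
    rw [h1', h2', h3', show m + 1 - 1 = m from by ring, hr1, show m - 1 - 1 = m - 2 from by ring, hd2]
    field_simp
    push_cast
    have hkq : (d m : ℚ) ^ 2 - ((n:ℚ) + 1) * d m * d (m - 1) + (d (m-1) : ℚ) ^ 2 = 1 := by
      exact_mod_cast hk
    linear_combination ((n:ℚ)+1) * hkq
end

section
/- For every integer m ≥ 0, the number of words of length m in the alphabet {0, 1, …, n} that do not contain the two-letter substring (0, n) (i.e., the number of functions w : {0,…,m−1} → {0,…,n} such that there is no index i < m−1 with w(i) = 0 and w(i+1) = n) equals d_m. -/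
def Good (n m : ℕ) (w : Fin m → Fin (n + 1)) : Prop :=
  ∀ (i : ℕ) (hi : i + 1 < m),
    ¬(w ⟨i, Nat.lt_of_succ_lt hi⟩ = 0 ∧ w ⟨i + 1, hi⟩ = Fin.last n)

lemma good_tail {n k : ℕ} {w : Fin (k+1) → Fin (n+1)} (hw : Good n (k+1) w) :
    Good n k (Fin.tail w) := by
  intro i hi h
  exact hw (i+1) (Nat.succ_lt_succ hi) ⟨h.1, h.2⟩

lemma good_cons {n k : ℕ} (x : Fin (n+1)) {w : Fin k → Fin (n+1)} (hw : Good n k w)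
    (hx : ∀ h0 : 0 < k, ¬(x = 0 ∧ w ⟨0, h0⟩ = Fin.last n)) :
    Good n (k+1) (Fin.cons x w) := by
  intro i hi h
  match i with
  | 0 => exact hx (by omega) ⟨h.1, h.2⟩
  | i+1 => exact hw i (by omega) ⟨h.1, h.2⟩

lemma last_ne_zero {n : ℕ} (hn : 1 ≤ n) : (Fin.last n : Fin (n+1)) ≠ 0 := by
  intro h
  have := congrArg Fin.val h
  simp at this
  omega

lemma key (n m : ℕ) (hn : 1 ≤ n) :
    Nat.card {w : Fin (m+2) → Fin (n+1) // Good n (m+2) w}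
      + Nat.card {u : Fin m → Fin (n+1) // Good n m u}
    = (n+1) * Nat.card {w : Fin (m+1) → Fin (n+1) // Good n (m+1) w} := by
  have e : ({w : Fin (m+2) → Fin (n+1) // Good n (m+2) w} ⊕
        {u : Fin m → Fin (n+1) // Good n m u})
      ≃ Fin (n+1) × {w : Fin (m+1) → Fin (n+1) // Good n (m+1) w} :=
  { toFun := fun p =>
      match p with
      | Sum.inl ⟨w, hw⟩ => (w 0, ⟨Fin.tail w, good_tail hw⟩)
      | Sum.inr ⟨u, hu⟩ => ((0 : Fin (n+1)),
          ⟨Fin.cons (Fin.last n) u,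
            good_cons _ hu (fun h0 h => last_ne_zero hn h.1)⟩)
    invFun := fun p =>
      if h : p.1 = 0 ∧ p.2.1 0 = Fin.last n then
        Sum.inr ⟨Fin.tail p.2.1, good_tail p.2.2⟩
      else
        Sum.inl ⟨Fin.cons p.1 p.2.1,
          good_cons _ p.2.2 (fun h0 hc => h ⟨hc.1, hc.2⟩)⟩
    left_inv := by
      rintro (⟨w, hw⟩ | ⟨u, hu⟩)
      · have hcond : ¬(w 0 = 0 ∧ Fin.tail w 0 = Fin.last n) := by
          intro h
          exact hw 0 (by omega) ⟨h.1, h.2⟩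
        dsimp only
        rw [dif_neg hcond]
        congr 1
        exact Subtype.ext (Fin.cons_self_tail w)
      · have hcond : ((0 : Fin (n+1)) = 0 ∧
            (Fin.cons (Fin.last n) u : ∀ _ : Fin (m+1), Fin (n+1)) 0 = Fin.last n) :=
          ⟨rfl, by simp⟩
        dsimp only
        rw [dif_pos hcond]
        simp [Fin.tail_cons]
    right_inv := by
      rintro ⟨x, w, hw⟩
      dsimp only
      by_cases h : x = 0 ∧ w 0 = Fin.last n
      · rw [dif_pos h]
        dsimp only
        refine Prod.ext h.1.symm (Subtype.ext ?_)
        show Fin.cons (Fin.last n) (Fin.tail w) = w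
        rw [← h.2, Fin.cons_self_tail]
      · rw [dif_neg h]
        refine Prod.ext ?_ (Subtype.ext ?_) <;> simp }
  rw [← Nat.card_sum, Nat.card_congr e, Nat.card_prod, Nat.card_eq_fintype_card (α := Fin (n+1)),
    Fintype.card_fin]

lemma base0 (n : ℕ) : Nat.card {w : Fin 0 → Fin (n+1) // Good n 0 w} = 1 := by
  have h : ∀ w : Fin 0 → Fin (n+1), Good n 0 w := by
    intro w i hi; omega
  rw [Nat.card_congr (Equiv.subtypeUnivEquiv h)]
  simp [Nat.card_eq_fintype_card]

lemma base1 (n : ℕ) : Nat.card {w : Fin 1 → Fin (n+1) // Good n 1 w} = n + 1 := by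
  have h : ∀ w : Fin 1 → Fin (n+1), Good n 1 w := by
    intro w i hi; omega
  rw [Nat.card_congr (Equiv.subtypeUnivEquiv h)]
  simp [Nat.card_eq_fintype_card]

/-- For every `m ≥ 0`, the number of words of length `m` in the alphabet `{0, 1, …, n}`
that do not contain the two-letter substring `(0, n)` equals `d_m`. -/
theorem stmt_11 (n : ℕ) (hn : 1 ≤ n) (d : ℤ → ℤ)
    (hneg : d (-1) = 0) (h0 : d 0 = 1) (h1 : d 1 = (n : ℤ) + 1)
    (hrec : ∀ m : ℤ, 2 ≤ m → d m = ((n : ℤ) + 1) * d (m - 1) - d (m - 2)) :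
    ∀ m : ℕ,
      (Nat.card {w : Fin m → Fin (n + 1) //
          ∀ (i : ℕ) (hi : i + 1 < m),
            ¬(w ⟨i, Nat.lt_of_succ_lt hi⟩ = 0 ∧ w ⟨i + 1, hi⟩ = Fin.last n)} : ℤ)
        = d (m : ℤ) := by
  have main : ∀ m : ℕ,
      (Nat.card {w : Fin m → Fin (n+1) // Good n m w} : ℤ) = d (m : ℤ) ∧
      (Nat.card {w : Fin (m+1) → Fin (n+1) // Good n (m+1) w} : ℤ) = d ((m : ℤ) + 1) := by
    intro m
    induction m with
    | zero =>
      constructor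
      · rw [base0]; push_cast; rw [h0]
      · rw [base1]; push_cast [h1]; ring
    | succ k ih =>
      refine ⟨by rw [show ((k:ℤ)+1) = ((k+1 : ℕ) : ℤ) by push_cast; ring] at ih; exact ih.2, ?_⟩
      have hk := key n k hn
      have hd : d ((k : ℤ) + 2) = ((n : ℤ) + 1) * d ((k : ℤ) + 1) - d (k : ℤ) := by
        have := hrec ((k : ℤ) + 2) (by omega)
        rw [show (k:ℤ)+2-1 = (k:ℤ)+1 by ring, show (k:ℤ)+2-2 = (k:ℤ) by ring] at this
        exact this
      have hcast : ((Nat.card {w : Fin (k+2) → Fin (n+1) // Good n (k+2) w} : ℕ) : ℤ)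
          + (Nat.card {u : Fin k → Fin (n+1) // Good n k u} : ℤ)
          = ((n : ℤ)+1) * (Nat.card {w : Fin (k+1) → Fin (n+1) // Good n (k+1) w} : ℤ) := by
        exact_mod_cast congrArg (Nat.cast : ℕ → ℤ) hk
      have h2 : ((k+1 : ℕ) : ℤ) + 1 = (k : ℤ) + 2 := by push_cast; ring
      rw [h2, hd, ← ih.1, ← ih.2]
      linarith [hcast]
  intro m
  exact (main m).1
end

section
/- Let H and K be complex Hilbert spaces with H nontrivial, let A, B : H → K be linear isometries (continuous linear maps with ‖Aξ‖ = ‖ξ‖ = ‖Bξ‖ for all ξ), and suppose there is a real number c such that the composition of the adjoint of A with B satisfies A† ∘ B = c·id_H. Then c ≤ 1 and the operator norm of the difference satisfies ‖A − B‖ = √(2(1 − c)). -/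
/-- Let `H`, `K` be complex Hilbert spaces, `H` nontrivial, and `A B : H → K` linear
isometries with `A† ∘ B = c·id_H` for some real number `c`.  Then `c ≤ 1` and
`‖A − B‖ = √(2(1 − c))`. -/
theorem stmt_13 {H K : Type*}
    [NormedAddCommGroup H] [InnerProductSpace ℂ H] [CompleteSpace H] [Nontrivial H]
    [NormedAddCommGroup K] [InnerProductSpace ℂ K] [CompleteSpace K]
    (A B : H →L[ℂ] K)
    (hA : ∀ ξ : H, ‖A ξ‖ = ‖ξ‖) (hB : ∀ ξ : H, ‖B ξ‖ = ‖ξ‖)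
    (c : ℝ)
    (hc : ContinuousLinearMap.adjoint A ∘L B = (c : ℂ) • ContinuousLinearMap.id ℂ H) :
    c ≤ 1 ∧ ‖A - B‖ = Real.sqrt (2 * (1 - c)) := by
  have key : ∀ ξ : H, ‖(A - B) ξ‖ ^ 2 = 2 * (1 - c) * ‖ξ‖ ^ 2 := by
    intro ξ
    have hinner : (inner ℂ (A ξ) (B ξ) : ℂ) = (c : ℂ) * (‖ξ‖ : ℂ) ^ 2 := by
      have h1 : (inner ℂ (A ξ) (B ξ) : ℂ) = inner ℂ ξ (ContinuousLinearMap.adjoint A (B ξ)) := by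
        rw [ContinuousLinearMap.adjoint_inner_right]
      have h2 : ContinuousLinearMap.adjoint A (B ξ) = (c : ℂ) • ξ := by
        have := congrArg (fun T => T ξ) hc
        simpa using this
      rw [h1, h2, inner_smul_right, inner_self_eq_norm_sq_to_K]
      norm_num [Complex.ofReal_pow]
    have hre : (RCLike.re (inner ℂ (A ξ) (B ξ) : ℂ) : ℝ) = c * ‖ξ‖ ^ 2 := by
      rw [hinner]; simp [← Complex.ofReal_pow]
    have hsq := @norm_sub_sq ℂ K _ _ _ (A ξ) (B ξ)
    simp only [ContinuousLinearMap.sub_apply]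
    rw [hsq, hA, hB, hre]
    ring
  have hc1 : c ≤ 1 := by
    obtain ⟨ξ, hξ⟩ := exists_ne (0 : H)
    have h1 := key ξ
    have h2 : (0:ℝ) ≤ 2 * (1 - c) * ‖ξ‖ ^ 2 := h1 ▸ sq_nonneg _
    have h3 : (0:ℝ) < ‖ξ‖ ^ 2 := pow_pos (norm_pos_iff.mpr hξ) 2
    nlinarith
  refine ⟨hc1, ?_⟩
  have hk : (0:ℝ) ≤ 2 * (1 - c) := by linarith
  have hnorm : ∀ ξ : H, ‖(A - B) ξ‖ = Real.sqrt (2 * (1 - c)) * ‖ξ‖ := by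
    intro ξ
    have := key ξ
    have h1 : ‖(A - B) ξ‖ = Real.sqrt (2 * (1 - c) * ‖ξ‖ ^ 2) := by
      rw [← this, Real.sqrt_sq (norm_nonneg _)]
    rw [h1, Real.sqrt_mul hk, Real.sqrt_sq (norm_nonneg _)]
  apply le_antisymm
  · exact (A - B).opNorm_le_bound (Real.sqrt_nonneg _) fun ξ => le_of_eq (hnorm ξ)
  · obtain ⟨ξ, hξ⟩ := exists_ne (0 : H)
    have h1 := (A - B).ratio_le_opNorm ξ
    rw [hnorm ξ, mul_div_assoc, div_self (by simpa using hξ), mul_one] at h1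
    exact h1
end

section
/- Let A be a unital C*-algebra, let w ∈ A be a partial isometry (i.e., w w* w = w), and let t ∈ (0, π/2]. Then 1 − cos(t)·w* is invertible in A, and the element u := −cos(t)·w + (1 − w w* + sin(t)·w w*)·(1 − cos(t)·w*)^{−1}·(1 − w* w + sin(t)·w* w) is a unitary element of A (that is, u* u = u u* = 1). In particular, for t = π/2 one has u = 1, and as t varies over (0, π/2] the elements u form a norm-continuous path of unitaries. -/
open scoped Real

/-- The unitary path element `u` built from a partial isometry `w` and a parameter `t`:
`u = −cos(t)·w + (1 − ww* + sin(t)·ww*)·(1 − cos(t)·w*)⁻¹·(1 − w*w + sin(t)·w*w)`. -/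
noncomputable def pathUnitary {A : Type*} [NormedRing A] [StarRing A] [CStarRing A]
    [NormedAlgebra ℂ A] [CompleteSpace A] (w : A) (t : ℝ) : A :=
  -(Real.cos t : ℂ) • w +
    ((1 : A) - w * star w + (Real.sin t : ℂ) • (w * star w)) *
      Ring.inverse ((1 : A) - (Real.cos t : ℂ) • star w) *
      ((1 : A) - star w * w + (Real.sin t : ℂ) • (star w * w))

section
variable {A : Type*} [NormedRing A] [StarRing A] [CStarRing A]
    [NormedAlgebra ℂ A] [CompleteSpace A]

lemma star_ofReal_smul (x : A) (r : ℝ) : star ((r : ℂ) • x) = (r : ℂ) • star x := by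
  rw [Complex.coe_smul, Complex.coe_smul]
  have h : (fun r : ℝ => star (r • x)) = fun r : ℝ => r • star x := by
    refine Continuous.ext_on (dense_iff_closure_eq.mpr Rat.denseRange_cast.closure_range) ?_ ?_ ?_
    · exact continuous_star.comp (continuous_id.smul continuous_const)
    · exact continuous_id.smul continuous_const
    · rintro - ⟨q, rfl⟩
      exact star_ratCast_smul q x
  exact congrFun h r

set_option maxHeartbeats 1000000 in
lemma key_s15 (w : A) (hw : w * star w * w = w) {cr sr : ℝ}
    (hcs : cr ^ 2 + sr ^ 2 = 1) (hs0 : sr ≠ 0)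
    (hXu : IsUnit ((1 : A) - (cr : ℂ) • star w)) (hYu : IsUnit ((1 : A) - (cr : ℂ) • w))
    (u : A)
    (hu : u = -(cr : ℂ) • w + ((1 : A) - w * star w + (sr : ℂ) • (w * star w)) *
      Ring.inverse ((1 : A) - (cr : ℂ) • star w) *
      ((1 : A) - star w * w + (sr : ℂ) • (star w * w))) :
    star u * u = 1 ∧ u * star u = 1 := by
  set W := star w with hWdef
  have h1 : w * (W * w) = w := by rw [← mul_assoc]; exact hw
  have h2 : W * (w * W) = W := by
    have := congrArg star hw
    simpa [star_mul, mul_assoc, hWdef] using this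
  set c : ℂ := (cr : ℂ) with hcdef
  set s : ℂ := (sr : ℂ) with hsdef
  obtain ⟨g, gr, hgr, hg⟩ : ∃ (g : ℂ) (gr : ℝ), g = (gr : ℂ) ∧ s * g = 1 - s :=
    ⟨((1 - sr) / sr : ℝ), (1 - sr) / sr, rfl, by
      have hsne : (sr : ℂ) ≠ 0 := Complex.ofReal_ne_zero.mpr hs0
      rw [hsdef]; push_cast; field_simp⟩
  have hcsC : c ^ 2 + s ^ 2 = 1 := by rw [hcdef, hsdef]; exact_mod_cast hcs
  set m₁ : A := 1 - c • w with hm₁def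
  set m₂ : A := (1 : A) - c • W with hm₂def
  set l : A := 1 - w * W + s • (w * W) with hldef
  set r : A := 1 - W * w + s • (W * w) with hrdef
  set l' : A := 1 + g • (w * W) with hl'def
  set r' : A := 1 + g • (W * w) with hr'def
  set X : A := Ring.inverse m₂ with hXdef
  set Y : A := star X with hYdef
  have hX1 : m₂ * X = 1 := Ring.mul_inverse_cancel _ hXu
  have hX2 : X * m₂ = 1 := Ring.inverse_mul_cancel _ hXu
  have hstar2 : star m₂ = m₁ := by
    rw [hm₂def, hm₁def, star_sub, star_one, hWdef, star_ofReal_smul, star_star]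
  have hY1 : m₁ * Y = 1 := by
    have := congrArg star hX2
    simpa [star_mul, hstar2, hYdef] using this
  have hY2 : Y * m₁ = 1 := by
    have := congrArg star hX1
    simpa [star_mul, hstar2, hYdef] using this
  have hll' : l * l' = 1 := by
    rw [hldef, hl'def]
    simp only [mul_one, one_mul, mul_add, add_mul, sub_mul, mul_sub, smul_mul_assoc,
      mul_smul_comm, smul_smul, mul_assoc, h1, h2]
    match_scalars
    all_goals (first
      | ring1
      | linear_combination hg
      | linear_combination s * hg - (1 + g) * hcsC
      | linear_combination (s * g + s + 1) * hg - (1 + g) ^ 2 * hcsC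
      | linear_combination -((s * g + s + 1) * hg) + (1 + g) ^ 2 * hcsC)
  have hl'l : l' * l = 1 := by
    rw [hldef, hl'def]
    simp only [mul_one, one_mul, mul_add, add_mul, sub_mul, mul_sub, smul_mul_assoc,
      mul_smul_comm, smul_smul, mul_assoc, h1, h2]
    match_scalars
    all_goals (first
      | ring1
      | linear_combination hg
      | linear_combination s * hg - (1 + g) * hcsC
      | linear_combination (s * g + s + 1) * hg - (1 + g) ^ 2 * hcsC
      | linear_combination -((s * g + s + 1) * hg) + (1 + g) ^ 2 * hcsC)
  have hrr' : r * r' = 1 := by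
    rw [hrdef, hr'def]
    simp only [mul_one, one_mul, mul_add, add_mul, sub_mul, mul_sub, smul_mul_assoc,
      mul_smul_comm, smul_smul, mul_assoc, h1, h2]
    match_scalars
    all_goals (first
      | ring1
      | linear_combination hg
      | linear_combination s * hg - (1 + g) * hcsC
      | linear_combination (s * g + s + 1) * hg - (1 + g) ^ 2 * hcsC
      | linear_combination -((s * g + s + 1) * hg) + (1 + g) ^ 2 * hcsC)
  have hr'r : r' * r = 1 := by
    rw [hrdef, hr'def]
    simp only [mul_one, one_mul, mul_add, add_mul, sub_mul, mul_sub, smul_mul_assoc,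
      mul_smul_comm, smul_smul, mul_assoc, h1, h2]
    match_scalars
    all_goals (first
      | ring1
      | linear_combination hg
      | linear_combination s * hg - (1 + g) * hcsC
      | linear_combination (s * g + s + 1) * hg - (1 + g) ^ 2 * hcsC
      | linear_combination -((s * g + s + 1) * hg) + (1 + g) ^ 2 * hcsC)
  have e1 : m₁ * r' = r + m₂ * ((-(c * (1 + g))) • w) := by
    rw [hm₁def, hm₂def, hrdef, hr'def]
    simp only [mul_one, one_mul, mul_add, add_mul, sub_mul, mul_sub, smul_mul_assoc,
      mul_smul_comm, smul_smul, mul_assoc, h1, h2]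
    match_scalars
    all_goals (first
      | ring1
      | linear_combination hg
      | linear_combination s * hg - (1 + g) * hcsC
      | linear_combination (s * g + s + 1) * hg - (1 + g) ^ 2 * hcsC
      | linear_combination -((s * g + s + 1) * hg) + (1 + g) ^ 2 * hcsC)
  have e3 : l * w = s • w := by
    rw [hldef]
    simp only [mul_one, one_mul, mul_add, add_mul, sub_mul, mul_sub, smul_mul_assoc,
      mul_smul_comm, smul_smul, mul_assoc, h1, h2]
    match_scalars
    all_goals (first
      | ring1
      | linear_combination hg
      | linear_combination s * hg - (1 + g) * hcsC
      | linear_combination (s * g + s + 1) * hg - (1 + g) ^ 2 * hcsC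
      | linear_combination -((s * g + s + 1) * hg) + (1 + g) ^ 2 * hcsC)
  have hfact : u = l * X * (m₁ * r') := by
    rw [hu, e1]
    calc -c • w + l * X * r
        = l * X * r + l * (X * m₂) * ((-(c * (1 + g))) • w) := by
          rw [hX2, mul_one, mul_smul_comm, e3, smul_smul]
          have hcg : -(c * (1 + g)) * s = -c := by linear_combination (-c) * hg
          rw [hcg, neg_smul]
          abel
      _ = l * X * (r + m₂ * ((-(c * (1 + g))) • w)) := by noncomm_ring
  have hstarl : star l = l := by
    rw [hldef]
    simp only [star_add, star_sub, star_one, hsdef, star_ofReal_smul, star_mul, star_star, hWdef]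
  have hstarr' : star r' = r' := by
    rw [hr'def, hgr]
    simp only [star_add, star_one, star_ofReal_smul, star_mul, star_star, hWdef]
  have hstar3 : star m₁ = m₂ := by rw [← hstar2, star_star]
  have hstaru : star u = (r' * m₂) * (Y * l) := by
    rw [hfact]
    simp only [star_mul, hstarl, hstarr', hstar3, ← hYdef]
    try noncomm_ring
  have hr'2 : r' * r' = 1 + (2 * g + g ^ 2) • (W * w) := by
    rw [hr'def]
    simp only [mul_one, one_mul, mul_add, add_mul, sub_mul, mul_sub, smul_mul_assoc,
      mul_smul_comm, smul_smul, mul_assoc, h1, h2]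
    match_scalars
    all_goals (first
      | ring1
      | linear_combination hg
      | linear_combination s * hg - (1 + g) * hcsC
      | linear_combination (s * g + s + 1) * hg - (1 + g) ^ 2 * hcsC
      | linear_combination -((s * g + s + 1) * hg) + (1 + g) ^ 2 * hcsC)
  have hl'2 : l' * l' = 1 + (2 * g + g ^ 2) • (w * W) := by
    rw [hl'def]
    simp only [mul_one, one_mul, mul_add, add_mul, sub_mul, mul_sub, smul_mul_assoc,
      mul_smul_comm, smul_smul, mul_assoc, h1, h2]
    match_scalars
    all_goals (first
      | ring1
      | linear_combination hg
      | linear_combination s * hg - (1 + g) * hcsC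
      | linear_combination (s * g + s + 1) * hg - (1 + g) ^ 2 * hcsC
      | linear_combination -((s * g + s + 1) * hg) + (1 + g) ^ 2 * hcsC)
  have hM : m₁ * (r' * r') * m₂ = m₂ * (l' * l') * m₁ := by
    rw [hr'2, hl'2, hm₁def, hm₂def]
    simp only [mul_one, one_mul, mul_add, add_mul, sub_mul, mul_sub, smul_mul_assoc,
      mul_smul_comm, smul_smul, mul_assoc, h1, h2]
    match_scalars
    all_goals (first
      | ring1
      | linear_combination hg
      | linear_combination s * hg - (1 + g) * hcsC
      | linear_combination (s * g + s + 1) * hg - (1 + g) ^ 2 * hcsC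
      | linear_combination -((s * g + s + 1) * hg) + (1 + g) ^ 2 * hcsC)
  have huu : u * star u = 1 := by
    calc u * star u = l * (X * ((m₁ * (r' * r') * m₂) * Y)) * l := by
          rw [hstaru, hfact]; noncomm_ring
      _ = l * (X * ((m₂ * (l' * l') * m₁) * Y)) * l := by rw [hM]
      _ = l * ((X * m₂) * (l' * l') * (m₁ * Y)) * l := by noncomm_ring
      _ = (l * l') * (l' * l) := by rw [hX2, hY1]; noncomm_ring
      _ = 1 := by rw [hll', hl'l, one_mul]
  have hl_u : IsUnit l := ⟨⟨l, l', hll', hl'l⟩, rfl⟩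
  have hX_u : IsUnit X := ⟨⟨X, m₂, hX2, hX1⟩, rfl⟩
  have hm₁_u : IsUnit m₁ := ⟨⟨m₁, Y, hY1, hY2⟩, rfl⟩
  have hr'_u : IsUnit r' := ⟨⟨r', r, hr'r, hrr'⟩, rfl⟩
  have hu_unit : IsUnit u := by
    rw [hfact]
    exact (hl_u.mul hX_u).mul (hm₁_u.mul hr'_u)
  have h9 : (↑hu_unit.unit⁻¹ : A) * u = 1 := by
    have h9' := hu_unit.unit.inv_mul
    rwa [IsUnit.unit_spec] at h9'
  have h8 : star u = (↑hu_unit.unit⁻¹ : A) := by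
    calc star u = 1 * star u := (one_mul _).symm
      _ = ((↑hu_unit.unit⁻¹ : A) * u) * star u := by rw [h9]
      _ = (↑hu_unit.unit⁻¹ : A) * (u * star u) := by rw [mul_assoc]
      _ = (↑hu_unit.unit⁻¹ : A) := by rw [huu, mul_one]
  exact ⟨by rw [h8]; exact h9, huu⟩
end

/-- Let `A` be a unital C*-algebra, `w ∈ A` a partial isometry (`w w* w = w`), and
`t ∈ (0, π/2]`.  Then `1 − cos(t)·w*` is invertible and the element
`u = −cos(t)·w + (1 − ww* + sin(t)·ww*)(1 − cos(t)·w*)⁻¹(1 − w*w + sin(t)·w*w)` is unitary.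
In particular `u = 1` for `t = π/2` and, as `t` varies over `(0, π/2]`, the elements `u`
form a norm-continuous path of unitaries. -/
theorem stmt_15 {A : Type*} [NormedRing A] [StarRing A] [CStarRing A]
    [NormedAlgebra ℂ A] [CompleteSpace A]
    (w : A) (hw : w * star w * w = w) :
    (∀ t ∈ Set.Ioc (0 : ℝ) (π / 2),
        IsUnit ((1 : A) - (Real.cos t : ℂ) • star w)) ∧
      (∀ t ∈ Set.Ioc (0 : ℝ) (π / 2),
        star (pathUnitary w t) * pathUnitary w t = 1 ∧
          pathUnitary w t * star (pathUnitary w t) = 1) ∧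
      pathUnitary w (π / 2) = 1 ∧
      ContinuousOn (pathUnitary w) (Set.Ioc (0 : ℝ) (π / 2)) := by

  have hnw : ‖w‖ ≤ 1 := by
    have hp : (star w * w) * (star w * w) = star w * w := by
      calc (star w * w) * (star w * w) = star w * (w * star w * w) := by noncomm_ring
      _ = star w * w := by rw [hw]
    have hsp : star (star w * w) = star w * w := by simp [star_mul]
    have h1 : ‖star w * w‖ = ‖w‖ * ‖w‖ := CStarRing.norm_star_mul_self
    have h2 := CStarRing.norm_star_mul_self (x := star w * w)
    rw [hsp, hp] at h2
    nlinarith [norm_nonneg w, sq_nonneg (‖w‖ - 1), sq_nonneg (‖w‖ + 1), sq_nonneg ‖w‖]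
  have hcoslt : ∀ t ∈ Set.Ioc (0 : ℝ) (π / 2), ‖((Real.cos t : ℂ))‖ < 1 := by
    intro t ht
    have h1 : Real.cos t < 1 := by
      have := Real.cos_lt_cos_of_nonneg_of_le_pi (le_refl 0)
        (ht.2.trans (by linarith [Real.pi_pos])) ht.1
      simpa using this
    have h0 : 0 ≤ Real.cos t :=
      Real.cos_nonneg_of_mem_Icc ⟨by linarith [ht.1.le, Real.pi_pos], ht.2⟩
    rw [Complex.norm_real]
    rw [Real.norm_eq_abs, abs_of_nonneg h0]
    exact h1
  have hXu : ∀ t ∈ Set.Ioc (0 : ℝ) (π / 2),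
      IsUnit ((1 : A) - (Real.cos t : ℂ) • star w) := by
    intro t ht
    have hlt : ‖(Real.cos t : ℂ) • star w‖ < 1 := by
      rw [norm_smul, norm_star]
      calc ‖((Real.cos t : ℂ))‖ * ‖w‖ ≤ ‖((Real.cos t : ℂ))‖ * 1 :=
            mul_le_mul_of_nonneg_left hnw (norm_nonneg _)
      _ < 1 := by rw [mul_one]; exact hcoslt t ht
    exact (Units.oneSub _ hlt).isUnit
  have hYu : ∀ t ∈ Set.Ioc (0 : ℝ) (π / 2),
      IsUnit ((1 : A) - (Real.cos t : ℂ) • w) := by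
    intro t ht
    have hlt : ‖(Real.cos t : ℂ) • w‖ < 1 := by
      rw [norm_smul]
      calc ‖((Real.cos t : ℂ))‖ * ‖w‖ ≤ ‖((Real.cos t : ℂ))‖ * 1 :=
            mul_le_mul_of_nonneg_left hnw (norm_nonneg _)
      _ < 1 := by rw [mul_one]; exact hcoslt t ht
    exact (Units.oneSub _ hlt).isUnit
  refine ⟨hXu, ?_, ?_, ?_⟩
  · intro t ht
    have hs0 : Real.sin t ≠ 0 := by
      have : 0 < Real.sin t :=
        Real.sin_pos_of_pos_of_lt_pi ht.1 (lt_of_le_of_lt ht.2 (by linarith [Real.pi_pos]))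
      exact ne_of_gt this
    exact key_s15 w hw (Real.cos_sq_add_sin_sq t) hs0 (hXu t ht) (hYu t ht) _ rfl
  · simp [pathUnitary, Real.cos_pi_div_two, Real.sin_pi_div_two]
  · have hcos : Continuous fun t : ℝ => ((Real.cos t : ℝ) : ℂ) :=
      Complex.continuous_ofReal.comp Real.continuous_cos
    have hsin : Continuous fun t : ℝ => ((Real.sin t : ℝ) : ℂ) :=
      Complex.continuous_ofReal.comp Real.continuous_sin
    have h1 : Continuous fun t : ℝ => -(Real.cos t : ℂ) • w := (hcos.neg).smul continuous_const
    have hA : Continuous fun t : ℝ =>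
        (1 : A) - w * star w + (Real.sin t : ℂ) • (w * star w) :=
      continuous_const.add (hsin.smul continuous_const)
    have hC : Continuous fun t : ℝ =>
        (1 : A) - star w * w + (Real.sin t : ℂ) • (star w * w) :=
      continuous_const.add (hsin.smul continuous_const)
    have harg : Continuous fun t : ℝ => (1 : A) - (Real.cos t : ℂ) • star w :=
      continuous_const.sub (hcos.smul continuous_const)
    have hinv : ContinuousOn
        (fun t : ℝ => Ring.inverse ((1 : A) - (Real.cos t : ℂ) • star w))
        (Set.Ioc (0 : ℝ) (π / 2)) := by
      intro t ht
      have hca := NormedRing.inverse_continuousAt (hXu t ht).unit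
      rw [IsUnit.unit_spec] at hca
      exact (ContinuousAt.comp (g := Ring.inverse)
        (f := fun t : ℝ => (1 : A) - (Real.cos t : ℂ) • star w)
        hca harg.continuousAt).continuousWithinAt
    have : pathUnitary w = fun t : ℝ =>
        -(Real.cos t : ℂ) • w +
          ((1 : A) - w * star w + (Real.sin t : ℂ) • (w * star w)) *
            Ring.inverse ((1 : A) - (Real.cos t : ℂ) • star w) *
            ((1 : A) - star w * w + (Real.sin t : ℂ) • (star w * w)) := rfl
    rw [this]
    exact h1.continuousOn.add ((hA.continuousOn.mul hinv).mul hC.continuousOn)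
end
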